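/- arXiv:2012.12746 — 2 statements merged into one kernel-verified Lean document; each statement's English description precedes it below -/
import Mathlib

section
/- For every positive integer N there exist positive integers A and B such that the system 4A = u² + v² + w², 4B = u⁴ + v⁴ + w⁴ has at least N distinct integral solutions (u, v, w) with u ≥ v ≥ w ≥ 0. -/
/-!
If `x² + 3y² = M` then the Piezas triple `(2x, x + 3y, x - 3y)` has sum of squares `6M` and
sum of fourth powers `18M²`, independently of the point chosen. The rational points
`((k² - 3)/(k² + 3), 2k/(k² + 3))` of `x² + 3y² = 1`, scaled by a common multiple of their
denominators, give arbitrarily many integer points on one ellipse `x² + 3y² = M²`; for `k ≥ 7` they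
satisfy `0 ≤ 3y ≤ x`, which makes the triple ordered and nonnegative.
-/

open Finset

section Piezas

variable {R : Type*} [CommRing R]

theorem piezas_sum_sq (x y : R) :
    (2 * x) ^ 2 + (x + 3 * y) ^ 2 + (x - 3 * y) ^ 2 = 6 * (x ^ 2 + 3 * y ^ 2) := by
  ring

theorem piezas_sum_pow_four (x y : R) :
    (2 * x) ^ 4 + (x + 3 * y) ^ 4 + (x - 3 * y) ^ 4 = 18 * (x ^ 2 + 3 * y ^ 2) ^ 2 := by
  ring

end Piezas

def piezasTriple (p : ℤ × ℤ) : ℤ × ℤ × ℤ := (2 * p.1, p.1 + 3 * p.2, p.1 - 3 * p.2)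

theorem piezasTriple_injective : Function.Injective piezasTriple := by
  rintro ⟨x, y⟩ ⟨x', y'⟩ h
  simp only [piezasTriple, Prod.mk.injEq] at h
  ext <;> omega

def IsOrderedSolution (A B : ℤ) (t : ℤ × ℤ × ℤ) : Prop :=
  t.1 ≥ t.2.1 ∧ t.2.1 ≥ t.2.2 ∧ t.2.2 ≥ 0 ∧
    4 * A = t.1 ^ 2 + t.2.1 ^ 2 + t.2.2 ^ 2 ∧ 4 * B = t.1 ^ 4 + t.2.1 ^ 4 + t.2.2 ^ 4

theorem isOrderedSolution_piezasTriple {m : ℤ} {p : ℤ × ℤ}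
    (hp : p.1 ^ 2 + 3 * p.2 ^ 2 = (2 * m) ^ 2) (hy : 0 ≤ p.2) (hxy : 3 * p.2 ≤ p.1) :
    IsOrderedSolution (6 * m ^ 2) (72 * m ^ 4) (piezasTriple p) := by
  refine ⟨by dsimp [piezasTriple]; linarith, by dsimp [piezasTriple]; linarith,
    by dsimp [piezasTriple]; linarith, ?_, ?_⟩
  · rw [piezasTriple, piezas_sum_sq, hp]; ring
  · rw [piezasTriple, piezas_sum_pow_four, hp]; ring

/-- The rational point `((k² - 3)/(k² + 3), 2k/(k² + 3))` of `x² + 3y² = 1` scaled by `M`; the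
integer division is exact only when `k² + 3 ∣ M`. -/
def conicPoint (M : ℤ) (k : ℕ) : ℤ × ℤ :=
  (M / ((k : ℤ) ^ 2 + 3) * ((k : ℤ) ^ 2 - 3), M / ((k : ℤ) ^ 2 + 3) * (2 * k))

section conicPoint

variable {M : ℤ} {k : ℕ}

theorem conicPoint_norm (hk : (k : ℤ) ^ 2 + 3 ∣ M) :
    (conicPoint M k).1 ^ 2 + 3 * (conicPoint M k).2 ^ 2 = M ^ 2 := by
  obtain ⟨q, hq⟩ := hk
  have hpos : (k : ℤ) ^ 2 + 3 ≠ 0 := by positivity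
  simp only [conicPoint, hq, Int.mul_ediv_cancel_left _ hpos]
  ring

theorem conicPoint_snd_nonneg (hM : 0 ≤ M) : 0 ≤ (conicPoint M k).2 :=
  mul_nonneg (Int.ediv_nonneg hM (by positivity)) (by positivity)

theorem three_mul_conicPoint_snd_le_fst (hM : 0 ≤ M) (hk : 7 ≤ k) :
    3 * (conicPoint M k).2 ≤ (conicPoint M k).1 := by
  have hq : 0 ≤ M / ((k : ℤ) ^ 2 + 3) := Int.ediv_nonneg hM (by positivity)
  have hk' : (7 : ℤ) ≤ k := by exact_mod_cast hk
  have hkk : 3 * (2 * (k : ℤ)) ≤ (k : ℤ) ^ 2 - 3 := by nlinarith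
  simp only [conicPoint]
  nlinarith [mul_le_mul_of_nonneg_left hkk hq]

theorem conicPoint_injOn (hM : M ≠ 0) :
    Set.InjOn (conicPoint M) {k | (k : ℤ) ^ 2 + 3 ∣ M} := by
  intro i hi j hj hij
  obtain ⟨qi, hqi⟩ := hi
  obtain ⟨qj, hqj⟩ := hj
  have hdivi : M / ((i : ℤ) ^ 2 + 3) = qi := by
    rw [hqi, Int.mul_ediv_cancel_left _ (by positivity)]
  have hdivj : M / ((j : ℤ) ^ 2 + 3) = qj := by
    rw [hqj, Int.mul_ediv_cancel_left _ (by positivity)]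
  have hfst := congrArg Prod.fst hij
  simp only [conicPoint, hdivi, hdivj] at hfst
  -- `x = M - 6q`, so equal abscissas force equal cofactors `q = M / (k² + 3)`.
  have hq : qi = qj := by
    have : 6 * qi = 6 * qj := by linear_combination hqj - hqi - hfst
    omega
  subst hq
  have hqi0 : qi ≠ 0 := by rintro rfl; exact hM (by simpa using hqi)
  have hsq : (i : ℤ) ^ 2 + 3 = (j : ℤ) ^ 2 + 3 := mul_right_cancel₀ hqi0 (hqi.symm.trans hqj)
  exact Nat.pow_left_injective two_ne_zero (by exact_mod_cast add_right_cancel hsq)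

end conicPoint

theorem stmt6_general (N : ℕ) :
    ∃ A B : ℤ, 0 < A ∧ 0 < B ∧ ∃ S : Finset (ℤ × ℤ × ℤ),
      N ≤ S.card ∧ ∀ p ∈ S,
        p.1 ≥ p.2.1 ∧ p.2.1 ≥ p.2.2 ∧ p.2.2 ≥ 0 ∧
        4 * A = p.1 ^ 2 + p.2.1 ^ 2 + p.2.2 ^ 2 ∧
        4 * B = p.1 ^ 4 + p.2.1 ^ 4 + p.2.2 ^ 4 := by
  set K := Ico 7 (N + 7)
  set m := ∏ k ∈ K, ((k : ℤ) ^ 2 + 3)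
  have hm : 0 < m := prod_pos fun k _ => by positivity
  have hdvd : ∀ k ∈ K, (k : ℤ) ^ 2 + 3 ∣ 2 * m := fun k hk =>
    dvd_mul_of_dvd_right (dvd_prod_of_mem _ hk) 2
  refine ⟨6 * m ^ 2, 72 * m ^ 4, by positivity, by positivity,
    K.image (piezasTriple ∘ conicPoint (2 * m)), ?_, ?_⟩
  · rw [card_image_of_injOn (piezasTriple_injective.comp_injOn
      ((conicPoint_injOn (by positivity)).mono hdvd))]
    simp [K]
  · simp only [mem_image, Function.comp_apply]
    rintro _ ⟨k, hk, rfl⟩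
    have hk7 : 7 ≤ k := (mem_Ico.mp hk).1
    exact isOrderedSolution_piezasTriple (conicPoint_norm (hdvd k hk))
      (conicPoint_snd_nonneg (by positivity)) (three_mul_conicPoint_snd_le_fst (by positivity) hk7)

/-- Claim 5.9: the system `4A = u² + v² + w²`, `4B = u⁴ + v⁴ + w⁴` admits
arbitrarily many ordered nonnegative integer solutions. -/
theorem stmt6 (N : ℕ) (hN : 0 < N) :
    ∃ A B : ℤ, 0 < A ∧ 0 < B ∧ ∃ S : Finset (ℤ × ℤ × ℤ),
      N ≤ S.card ∧ ∀ p ∈ S,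
        p.1 ≥ p.2.1 ∧ p.2.1 ≥ p.2.2 ∧ p.2.2 ≥ 0 ∧
        4 * A = p.1 ^ 2 + p.2.1 ^ 2 + p.2.2 ^ 2 ∧
        4 * B = p.1 ^ 4 + p.2.1 ^ 4 + p.2.2 ^ 4 :=
  stmt6_general N
end

section
/- For every positive integer N there exists a pair of positive integers (λ, ζ) such that the system λ = u² + v² + w², ζ = u²v² + u²w² + v²w² has at least N distinct integral solutions with u ≥ v ≥ w ≥ 0. -/
/-!
For `u = v + w` one has `u² + v² + w² = 2 q` and `u²v² + u²w² + v²w² = q²` with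
`q = v² + vw + w²`, so it suffices to find a `q` with many representations by this form
with `v ≥ w ≥ 0`. The form is the norm of `v - wω` in `ℤ[ω]`, and `7` splits there. If `q`
has a representation primitive at `7`, then `49 q` has one more representation than `q`:
the old ones scaled by `7`, and a new one, again primitive at `7`, obtained by multiplying
the primitive one by a suitable element of norm `49`.
-/

def eisensteinNorm (a b : ℤ) : ℤ := a ^ 2 + a * b + b ^ 2

lemma eisensteinNorm_mul (a b c d : ℤ) :
    eisensteinNorm a b * eisensteinNorm c d =
      eisensteinNorm (a * c - b * d) (a * d + b * c + b * d) := by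
  unfold eisensteinNorm; ring

lemma eisensteinNorm_mul_mul (k a b : ℤ) :
    eisensteinNorm (k * a) (k * b) = k ^ 2 * eisensteinNorm a b := by
  unfold eisensteinNorm; ring

lemma eisensteinNorm_pos {a b : ℤ} (h : a ≠ 0 ∨ b ≠ 0) : 0 < eisensteinNorm a b := by
  unfold eisensteinNorm
  rcases h with h | h <;> nlinarith [sq_nonneg (a + b), sq_pos_of_ne_zero h]

lemma two_mul_eisensteinNorm (v w : ℤ) :
    2 * eisensteinNorm v w = (v + w) ^ 2 + v ^ 2 + w ^ 2 := by
  unfold eisensteinNorm; ring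

lemma eisensteinNorm_sq (v w : ℤ) :
    eisensteinNorm v w ^ 2 = (v + w) ^ 2 * v ^ 2 + (v + w) ^ 2 * w ^ 2 + v ^ 2 * w ^ 2 := by
  unfold eisensteinNorm; ring

lemma exists_nonneg_eisensteinNorm_eq (a b : ℤ) : ∃ x y : ℤ, 0 ≤ x ∧ 0 ≤ y ∧
    eisensteinNorm x y = eisensteinNorm a b ∧ x.gcd y = a.gcd b := by
  have h₁ : eisensteinNorm (a + b) (-b) = eisensteinNorm a b := by unfold eisensteinNorm; ring
  have h₂ : eisensteinNorm (-(a + b)) a = eisensteinNorm a b := by unfold eisensteinNorm; ring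
  have h₃ : eisensteinNorm (a + b) (-a) = eisensteinNorm a b := by unfold eisensteinNorm; ring
  have h₄ : eisensteinNorm (-(a + b)) b = eisensteinNorm a b := by unfold eisensteinNorm; ring
  have h₅ : eisensteinNorm (-a) (-b) = eisensteinNorm a b := by unfold eisensteinNorm; ring
  rcases le_or_gt 0 a with ha | ha <;> rcases le_or_gt 0 b with hb | hb
  · exact ⟨a, b, ha, hb, rfl, rfl⟩
  · rcases le_or_gt 0 (a + b) with hab | hab
    · exact ⟨a + b, -b, hab, by omega, h₁, by rw [Int.gcd_neg, Int.gcd_add_self_left]⟩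
    · exact ⟨-(a + b), a, by omega, ha, h₂,
        by rw [Int.neg_gcd, Int.gcd_self_add_left, Int.gcd_comm]⟩
  · rcases le_or_gt 0 (a + b) with hab | hab
    · exact ⟨a + b, -a, hab, by omega, h₃,
        by rw [Int.gcd_neg, Int.gcd_self_add_left, Int.gcd_comm]⟩
    · exact ⟨-(a + b), b, by omega, hb, h₄, by rw [Int.neg_gcd, Int.gcd_add_self_left]⟩
  · exact ⟨-a, -b, by omega, by omega, h₅, by rw [Int.neg_gcd, Int.gcd_neg]⟩

lemma exists_eisensteinNorm_eq_of_le (a b : ℤ) : ∃ v w : ℤ, w ≤ v ∧ 0 ≤ w ∧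
    eisensteinNorm v w = eisensteinNorm a b ∧ v.gcd w = a.gcd b := by
  obtain ⟨x, y, hx, hy, hnorm, hgcd⟩ := exists_nonneg_eisensteinNorm_eq a b
  rcases le_total y x with hxy | hxy
  · exact ⟨x, y, hxy, hy, hnorm, hgcd⟩
  · refine ⟨y, x, hxy, hx, ?_, by rw [Int.gcd_comm, hgcd]⟩
    rw [← hnorm]; unfold eisensteinNorm; ring

lemma exists_eisensteinNorm_eq_forty_nine_mul {a b : ℤ} (h : ¬ 7 ∣ a.gcd b) :
    ∃ a' b' : ℤ, eisensteinNorm a' b' = 49 * eisensteinNorm a b ∧ ¬ 7 ∣ a'.gcd b' := by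
  rw [Int.dvd_gcd_iff] at h
  simp only [Int.dvd_gcd_iff, Nat.cast_ofNat]
  -- `-3 - 8ω` and its conjugate `5 + 8ω` are, up to units, the squares of the two primes
  -- above `7`, so they cannot both multiply `a - bω` into `7 ℤ[ω]`.
  by_cases h7 : 7 ∣ a + 3 * b
  · refine ⟨a * -3 - b * 8, a * 8 + b * -3 + b * 8, ?_, by omega⟩
    rw [← eisensteinNorm_mul, mul_comm]; norm_num [eisensteinNorm]
  · refine ⟨a * 5 - b * -8, a * -8 + b * 5 + b * -8, ?_, by omega⟩
    rw [← eisensteinNorm_mul, mul_comm]; norm_num [eisensteinNorm]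

lemma exists_many_eisensteinNorm_eq (n : ℕ) : ∃ a b : ℤ, ¬ 7 ∣ a.gcd b ∧
    ∃ T : Finset (ℤ × ℤ), n ≤ T.card ∧
      ∀ p ∈ T, p.2 ≤ p.1 ∧ 0 ≤ p.2 ∧ eisensteinNorm p.1 p.2 = eisensteinNorm a b := by
  induction n with
  | zero => exact ⟨1, 0, by decide, ∅, le_rfl, by simp⟩
  | succ n ih =>
    obtain ⟨a, b, hprim, T, hcard, hT⟩ := ih
    obtain ⟨a', b', hnorm', hprim'⟩ := exists_eisensteinNorm_eq_forty_nine_mul hprim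
    obtain ⟨v, w, hwv, hw, hnorm, hgcd⟩ := exists_eisensteinNorm_eq_of_le a' b'
    let scale : ℤ × ℤ → ℤ × ℤ := fun p => (7 * p.1, 7 * p.2)
    have hscale : Function.Injective scale := fun p p' h => by
      simp only [scale, Prod.ext_iff] at h ⊢; omega
    have hnew : (v, w) ∉ T.image scale := by
      rintro hmem
      obtain ⟨p, -, hp⟩ := Finset.mem_image.mp hmem
      simp only [scale, Prod.ext_iff] at hp
      rw [← hgcd, ← hp.1, ← hp.2, Int.gcd_mul_left] at hprim'
      exact hprim' (dvd_mul_right 7 _)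
    refine ⟨a', b', hprim', insert (v, w) (T.image scale), ?_, ?_⟩
    · rw [Finset.card_insert_of_notMem hnew, Finset.card_image_of_injective _ hscale]
      omega
    · intro p hp
      rcases Finset.mem_insert.mp hp with rfl | hp
      · exact ⟨hwv, hw, hnorm⟩
      · obtain ⟨r, hr, rfl⟩ := Finset.mem_image.mp hp
        obtain ⟨hr₁, hr₂, hr₃⟩ := hT r hr
        refine ⟨by dsimp only [scale]; omega, by dsimp only [scale]; omega, ?_⟩
        rw [eisensteinNorm_mul_mul, hr₃, hnorm']; norm_num

theorem stmt7_general (N : ℕ) :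
    ∃ lam zeta : ℤ, 0 < lam ∧ 0 < zeta ∧ ∃ S : Finset (ℤ × ℤ × ℤ),
      N ≤ S.card ∧ ∀ p ∈ S,
        p.1 ≥ p.2.1 ∧ p.2.1 ≥ p.2.2 ∧ p.2.2 ≥ 0 ∧
        lam = p.1 ^ 2 + p.2.1 ^ 2 + p.2.2 ^ 2 ∧
        zeta = p.1 ^ 2 * p.2.1 ^ 2 + p.1 ^ 2 * p.2.2 ^ 2 + p.2.1 ^ 2 * p.2.2 ^ 2 := by
  obtain ⟨a, b, hprim, T, hcard, hT⟩ := exists_many_eisensteinNorm_eq N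
  have hq : 0 < eisensteinNorm a b :=
    eisensteinNorm_pos (by by_contra! h; rw [h.1, h.2] at hprim; exact hprim (by decide))
  let lift : ℤ × ℤ → ℤ × ℤ × ℤ := fun p => (p.1 + p.2, p.1, p.2)
  have hlift : Function.Injective lift := fun p p' h => by
    simp only [lift, Prod.ext_iff] at h ⊢; omega
  refine ⟨2 * eisensteinNorm a b, eisensteinNorm a b ^ 2, by positivity, by positivity,
    T.image lift, by rwa [Finset.card_image_of_injective _ hlift], ?_⟩
  intro p hp
  obtain ⟨r, hr, rfl⟩ := Finset.mem_image.mp hp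
  obtain ⟨hr₁, hr₂, hr₃⟩ := hT r hr
  exact ⟨by dsimp only [lift]; omega, hr₁, hr₂, by rw [← hr₃, two_mul_eisensteinNorm],
    by rw [← hr₃, eisensteinNorm_sq]⟩

/-- Lemma 5.8: the system `λ = u² + v² + w²`, `ζ = u²v² + u²w² + v²w²` admits
arbitrarily many ordered nonnegative integer solutions. -/
theorem stmt7 (N : ℕ) (hN : 0 < N) :
    ∃ lam zeta : ℤ, 0 < lam ∧ 0 < zeta ∧ ∃ S : Finset (ℤ × ℤ × ℤ),
      N ≤ S.card ∧ ∀ p ∈ S,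
        p.1 ≥ p.2.1 ∧ p.2.1 ≥ p.2.2 ∧ p.2.2 ≥ 0 ∧
        lam = p.1 ^ 2 + p.2.1 ^ 2 + p.2.2 ^ 2 ∧
        zeta = p.1 ^ 2 * p.2.1 ^ 2 + p.1 ^ 2 * p.2.2 ^ 2 + p.2.1 ^ 2 * p.2.2 ^ 2 :=
  stmt7_general N
end
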